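/- For independent random variables X and Y with X ≥ 0 and Y > 0 (and suitable integrability), E[ln(1 + X/Y)] = ∫₀^∞ (1 − L_X(z)) · L_Y(z) · dz/z, where L_X(z) = E[e^{−zX}] and L_Y(z) = E[e^{−zY}] are the Laplace transforms of X and Y. -/

import Mathlib

/-!
Frullani's integral `log (b / a) = ∫₀^∞ (e^{-za} - e^{-zb}) dz / z`, itself obtained by writing
the integrand as `∫ₐᵇ e^{-zt} dt` and swapping the integrals, turns `log (1 + X / Y)` into
`∫₀^∞ (e^{-zY} - e^{-z(X+Y)}) dz / z`. The integrand is nonnegative with integrable sections, so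
the expectation can be moved inside the `dz`-integral, and independence factors
`E[e^{-z(X+Y)}] = L_X(z) L_Y(z)`.
-/

open MeasureTheory ProbabilityTheory Real Set

theorem integral_exp_neg_mul_Ioi {t : ℝ} (ht : 0 < t) :
    ∫ z in Ioi (0 : ℝ), exp (-(z * t)) = t⁻¹ := by
  simpa [mul_comm] using integral_exp_mul_Ioi (a := -t) (by linarith) 0

theorem integrableOn_exp_neg_mul_Ioi {t : ℝ} (ht : 0 < t) :
    IntegrableOn (fun z => exp (-(z * t))) (Ioi (0 : ℝ)) := by
  simpa [mul_comm] using integrableOn_exp_mul_Ioi (a := -t) (by linarith) 0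

theorem intervalIntegral_exp_neg_mul {a b z : ℝ} (hz : z ≠ 0) :
    ∫ t in a..b, exp (-(z * t)) = (exp (-(z * a)) - exp (-(z * b))) / z := by
  have := intervalIntegral.integral_comp_mul_left (fun u => exp (-u)) hz (a := a) (b := b)
  rw [this, intervalIntegral.integral_comp_neg, integral_exp, smul_eq_mul]
  ring

theorem integrable_exp_neg_mul_uIoc_prod_Ioi {a b : ℝ} (ha : 0 < a) (hb : 0 < b) :
    Integrable (fun p : ℝ × ℝ => exp (-(p.2 * p.1)))
      ((volume.restrict (uIoc a b)).prod (volume.restrict (Ioi 0))) := by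
  have hpos : ∀ t ∈ uIoc a b, 0 < t := fun t ht => (lt_min ha hb).trans ht.1
  rw [integrable_prod_iff (by fun_prop)]
  refine ⟨?_, ?_⟩
  · filter_upwards [ae_restrict_mem measurableSet_uIoc] with t ht
    exact integrableOn_exp_neg_mul_Ioi (hpos t ht)
  · have hinv : IntegrableOn (fun t : ℝ => t⁻¹) (uIoc a b) :=
      intervalIntegrable_iff.1 (intervalIntegral.intervalIntegrable_inv
        (fun t ht => (lt_min ha hb).trans_le ht.1 |>.ne') continuousOn_id)
    refine hinv.congr ?_
    filter_upwards [ae_restrict_mem measurableSet_uIoc] with t ht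
    simp_rw [Real.norm_of_nonneg (exp_pos _).le]
    exact (integral_exp_neg_mul_Ioi (hpos t ht)).symm

theorem integrableOn_exp_neg_mul_sub_div_Ioi {a b : ℝ} (ha : 0 < a) (hb : 0 < b) :
    IntegrableOn (fun z => (exp (-(z * a)) - exp (-(z * b))) / z) (Ioi 0) := by
  have h := (integrable_exp_neg_mul_uIoc_prod_Ioi ha hb).integral_prod_right.const_mul
    (if a ≤ b then 1 else -1 : ℝ)
  refine h.congr ?_
  filter_upwards [ae_restrict_mem measurableSet_Ioi] with z hz
  rw [← smul_eq_mul, ← intervalIntegral.intervalIntegral_eq_integral_uIoc,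
    intervalIntegral_exp_neg_mul (ne_of_gt hz)]

theorem integral_exp_neg_mul_sub_div_Ioi {a b : ℝ} (ha : 0 < a) (hb : 0 < b) :
    ∫ z in Ioi 0, (exp (-(z * a)) - exp (-(z * b))) / z = log (b / a) := by
  calc ∫ z in Ioi 0, (exp (-(z * a)) - exp (-(z * b))) / z
      = ∫ z in Ioi 0, ∫ t in a..b, exp (-(z * t)) :=
        setIntegral_congr_fun measurableSet_Ioi fun z hz =>
          (intervalIntegral_exp_neg_mul (ne_of_gt hz)).symm
    _ = ∫ t in a..b, ∫ z in Ioi 0, exp (-(z * t)) :=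
        (intervalIntegral_integral_swap (integrable_exp_neg_mul_uIoc_prod_Ioi ha hb)).symm
    _ = ∫ t in a..b, t⁻¹ := intervalIntegral.integral_congr fun t ht =>
        integral_exp_neg_mul_Ioi ((lt_min ha hb).trans_le ht.1)
    _ = log (b / a) := integral_inv_of_pos ha hb

theorem exp_neg_mul_sub_div_nonneg {a b : ℝ} (hab : a ≤ b) (z : ℝ) :
    0 ≤ (exp (-(z * a)) - exp (-(z * b))) / z := by
  rcases le_total 0 z with hz | hz
  · exact div_nonneg (sub_nonneg.2 (exp_le_exp.2 (by nlinarith))) hz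
  · exact div_nonneg_of_nonpos (sub_nonpos.2 (exp_le_exp.2 (by nlinarith))) hz

theorem integral_integral_swap_of_nonneg {α β : Type*} [MeasurableSpace α] [MeasurableSpace β]
    {μ : Measure α} {ν : Measure β} [SFinite μ] [SFinite ν] {f : α → β → ℝ}
    (hf : AEStronglyMeasurable (Function.uncurry f) (μ.prod ν))
    (hf₀ : ∀ᵐ p ∂μ.prod ν, 0 ≤ f p.1 p.2)
    (hμ : ∀ᵐ x ∂μ, Integrable (f x) ν) (hν : ∀ᵐ y ∂ν, Integrable (fun x => f x y) μ) :
    ∫ x, ∫ y, f x y ∂ν ∂μ = ∫ y, ∫ x, f x y ∂μ ∂ν := by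
  -- Without joint integrability, both outer integrands fail to be integrable: both sides are `0`.
  by_cases hint : Integrable (Function.uncurry f) (μ.prod ν)
  · exact integral_integral_swap hint
  have hx : ¬ Integrable (fun x => ∫ y, f x y ∂ν) μ := by
    refine fun h => hint ((integrable_prod_iff hf).2 ⟨hμ, h.congr ?_⟩)
    filter_upwards [Measure.ae_ae_of_ae_prod hf₀] with x hx
    exact integral_congr_ae (hx.mono fun y hy => (Real.norm_of_nonneg hy).symm)
  have hy : ¬ Integrable (fun y => ∫ x, f x y ∂μ) ν := by
    refine fun h => hint ((integrable_prod_iff' hf).2 ⟨hν, h.congr ?_⟩)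
    have hf₀' := (Measure.measurePreserving_swap (μ := ν) (ν := μ)).quasiMeasurePreserving.ae hf₀
    filter_upwards [Measure.ae_ae_of_ae_prod hf₀'] with y hy
    exact integral_congr_ae (hy.mono fun x hx => (Real.norm_of_nonneg hx).symm)
  rw [integral_undef hx, integral_undef hy]

theorem integrable_exp_neg_mul_of_nonneg {Ω : Type*} [MeasurableSpace Ω] {μ : Measure Ω}
    [IsFiniteMeasure μ] {Z : Ω → ℝ} (hZm : Measurable Z) (hZ : ∀ ω, 0 ≤ Z ω) {z : ℝ}
    (hz : 0 ≤ z) : Integrable (fun ω => exp (-(z * Z ω))) μ :=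
  .of_mem_Icc 0 1 (by fun_prop) (ae_of_all _ fun ω =>
    ⟨(exp_pos _).le, exp_le_one_iff.2 (neg_nonpos.2 (mul_nonneg hz (hZ ω)))⟩)

theorem ProbabilityTheory.IndepFun.integral_exp_neg_mul_add {Ω : Type*} [MeasurableSpace Ω]
    {μ : Measure Ω} {X Y : Ω → ℝ} (hindep : IndepFun X Y μ) (hXm : Measurable X)
    (hYm : Measurable Y) (z : ℝ) :
    ∫ ω, exp (-(z * (X ω + Y ω))) ∂μ =
      (∫ ω, exp (-(z * X ω)) ∂μ) * ∫ ω, exp (-(z * Y ω)) ∂μ := by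
  simpa [mgf, ← neg_mul] using
    hindep.mgf_add' (t := -z) hXm.aestronglyMeasurable hYm.aestronglyMeasurable

theorem stmt0_general {Ω : Type*} [MeasureSpace Ω] [IsProbabilityMeasure (ℙ : Measure Ω)]
    (X Y : Ω → ℝ) (hXm : Measurable X) (hYm : Measurable Y)
    (hindep : IndepFun X Y ℙ)
    (hX : ∀ ω, 0 ≤ X ω) (hY : ∀ ω, 0 < Y ω) :
    ∫ ω, Real.log (1 + X ω / Y ω) ∂ℙ =
      ∫ z in Set.Ioi (0 : ℝ),
        (1 - ∫ ω, Real.exp (-(z * X ω)) ∂ℙ) * (∫ ω, Real.exp (-(z * Y ω)) ∂ℙ) / z := by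
  have hXY : ∀ ω, 0 < X ω + Y ω := fun ω => add_pos_of_nonneg_of_pos (hX ω) (hY ω)
  have hintY {z : ℝ} (hz : 0 ≤ z) : Integrable (fun ω => exp (-(z * Y ω))) ℙ :=
    integrable_exp_neg_mul_of_nonneg hYm (fun ω => (hY ω).le) hz
  have hintXY {z : ℝ} (hz : 0 ≤ z) : Integrable (fun ω => exp (-(z * (X ω + Y ω)))) ℙ :=
    integrable_exp_neg_mul_of_nonneg (hXm.add hYm) (fun ω => (hXY ω).le) hz
  have hlog : ∀ ω, log (1 + X ω / Y ω) =
      ∫ z in Ioi 0, (exp (-(z * Y ω)) - exp (-(z * (X ω + Y ω)))) / z := fun ω => by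
    rw [integral_exp_neg_mul_sub_div_Ioi (hY ω) (hXY ω), add_div, div_self (hY ω).ne', add_comm]
  have hlaplace : ∀ z ∈ Ioi (0 : ℝ),
      ∫ ω, (exp (-(z * Y ω)) - exp (-(z * (X ω + Y ω)))) / z ∂ℙ =
        (1 - ∫ ω, exp (-(z * X ω)) ∂ℙ) * (∫ ω, exp (-(z * Y ω)) ∂ℙ) / z := fun z hz => by
    rw [integral_div, integral_sub (hintY hz.le) (hintXY hz.le),
      hindep.integral_exp_neg_mul_add hXm hYm]
    ring
  rw [integral_congr_ae (ae_of_all _ hlog), integral_integral_swap_of_nonneg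
    (Measurable.aestronglyMeasurable (by fun_prop))
    (ae_of_all _ fun p => exp_neg_mul_sub_div_nonneg (le_add_of_nonneg_left (hX p.1)) p.2)
    (ae_of_all _ fun ω => integrableOn_exp_neg_mul_sub_div_Ioi (hY ω) (hXY ω))
    ((ae_restrict_mem measurableSet_Ioi).mono fun z hz =>
      ((hintY hz.le).sub (hintXY hz.le)).div_const z)]
  exact setIntegral_congr_fun measurableSet_Ioi hlaplace

/-- For independent random variables `X ≥ 0` and `Y > 0`,
`E[ln(1 + X/Y)] = ∫₀^∞ (1 − L_X(z)) L_Y(z) dz/z` where `L_X`, `L_Y` are Laplace transforms. -/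
theorem stmt0 {Ω : Type*} [MeasureSpace Ω] [IsProbabilityMeasure (ℙ : Measure Ω)]
    (X Y : Ω → ℝ) (hXm : Measurable X) (hYm : Measurable Y)
    (hindep : IndepFun X Y ℙ)
    (hX : ∀ ω, 0 ≤ X ω) (hY : ∀ ω, 0 < Y ω)
    (hint : Integrable (fun ω => Real.log (1 + X ω / Y ω)) ℙ) :
    ∫ ω, Real.log (1 + X ω / Y ω) ∂ℙ =
      ∫ z in Set.Ioi (0 : ℝ),
        (1 - ∫ ω, Real.exp (-(z * X ω)) ∂ℙ) * (∫ ω, Real.exp (-(z * Y ω)) ∂ℙ) / z :=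
  stmt0_general X Y hXm hYm hindep hX hY
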